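/- Let (X, ≤₁, ≤₂) be an FM frame. For any refined regular open set Y ∈ RO₁₂(X), Y equals the join in RO₁₂(X) of the refined regular open closures of its singletons: Y = ⋁_{RO₁₂}{c({x}) | x ∈ Y}, where the join of a family in RO₁₂(X) is I₁C₂ applied to its union. Consequently {c({x}) | x ∈ X} is join-dense in RO₁₂(X). -/

import Mathlib

/-! A regular open set `Y = I₁C₂(Y)` is a `≤₁`-upset, so `c({x}) = I₁C₂(↑₁{x}) ⊆ I₁C₂(Y) = Y` for
`x ∈ Y`; as `x ∈ c({x})`, the union of these closures is `Y` itself, and `I₁C₂` fixes it. -/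

/-- `I₁C₂` for the Alexandroff upset topologies of an FM frame. -/
def fmIC {X : Type*} (le1 le2 : X → X → Prop) (A : Set X) : Set X :=
  {x | ∀ y, le1 x y → ∃ z, le2 y z ∧ z ∈ A}

/-- The `≤₁`-upward closure. -/
def fmUp1 {X : Type*} (le1 : X → X → Prop) (Y : Set X) : Set X :=
  {x | ∃ y ∈ Y, le1 y x}

section FMFrame

variable {X : Type*} {le1 le2 : X → X → Prop}

lemma fmIC_mono {A B : Set X} (h : A ⊆ B) : fmIC le1 le2 A ⊆ fmIC le1 le2 B :=
  fun _ hx y hxy => (hx y hxy).imp fun _ hz => ⟨hz.1, h hz.2⟩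

lemma mem_fmIC_of_le1 [IsTrans X le1] {A : Set X} {x x' : X} (hx : x ∈ fmIC le1 le2 A)
    (h : le1 x x') : x' ∈ fmIC le1 le2 A :=
  fun y hy => hx y (_root_.trans h hy)

lemma mem_fmIC_fmUp1_singleton [Std.Refl le2] (x : X) :
    x ∈ fmIC le1 le2 (fmUp1 le1 {x}) :=
  fun y hxy => ⟨y, refl_of le2 y, x, rfl, hxy⟩

lemma fmIC_fmUp1_singleton_subset [IsTrans X le1] {Y : Set X} (hY : Y = fmIC le1 le2 Y)
    {x : X} (hx : x ∈ Y) : fmIC le1 le2 (fmUp1 le1 {x}) ⊆ Y := by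
  have hup : fmUp1 le1 {x} ⊆ Y := by
    rintro z ⟨_, rfl, hxz⟩
    rw [hY] at hx ⊢
    exact mem_fmIC_of_le1 hx hxz
  exact hY ▸ fmIC_mono hup

variable [IsTrans X le1] [Std.Refl le2] {Y : Set X}

lemma biUnion_fmIC_fmUp1_singleton_eq (hY : Y = fmIC le1 le2 Y) :
    ⋃ x ∈ Y, fmIC le1 le2 (fmUp1 le1 {x}) = Y :=
  Set.Subset.antisymm (Set.iUnion₂_subset fun _ => fmIC_fmUp1_singleton_subset hY)
    fun x hx => Set.mem_biUnion hx (mem_fmIC_fmUp1_singleton x)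

lemma sUnion_fmIC_fmUp1_singleton_eq (hY : Y = fmIC le1 le2 Y) :
    ⋃₀ {Z : Set X | (∃ x : X, Z = fmIC le1 le2 (fmUp1 le1 {x})) ∧ Z ⊆ Y} = Y :=
  Set.Subset.antisymm (Set.sUnion_subset fun _ hZ => hZ.2)
    fun x hx => ⟨_, ⟨⟨x, rfl⟩, fmIC_fmUp1_singleton_subset hY hx⟩, mem_fmIC_fmUp1_singleton x⟩

end FMFrame

theorem fm_singleton_closures_join_dense_general {X : Type*} (le1 le2 : X → X → Prop)
    [IsPartialOrder X le1] [IsPartialOrder X le2]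
    (Y : Set X) (hY : Y = fmIC le1 le2 Y) :
    Y = fmIC le1 le2 (⋃ x ∈ Y, fmIC le1 le2 (fmUp1 le1 {x})) ∧
    Y = fmIC le1 le2
        (⋃₀ {Z : Set X | (∃ x : X, Z = fmIC le1 le2 (fmUp1 le1 {x})) ∧ Z ⊆ Y}) := by
  rw [biUnion_fmIC_fmUp1_singleton_eq hY, sUnion_fmIC_fmUp1_singleton_eq hY]
  exact ⟨hY, hY⟩

/-- Every refined regular open set `Y` is the join (in `RO₁₂(X)`, i.e. `I₁C₂` of the
union) of the refined regular open closures `c({x}) = I₁C₂(↑₁{x})` of the singletons of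
its elements; consequently the refined regular open closures of singletons are
join-dense in `RO₁₂(X)`. -/
theorem fm_singleton_closures_join_dense {X : Type*} (le1 le2 : X → X → Prop)
    [IsPartialOrder X le1] [IsPartialOrder X le2]
    (hsub : ∀ x y, le2 x y → le1 x y)
    (Y : Set X) (hY : Y = fmIC le1 le2 Y) :
    Y = fmIC le1 le2 (⋃ x ∈ Y, fmIC le1 le2 (fmUp1 le1 {x})) ∧
    Y = fmIC le1 le2
        (⋃₀ {Z : Set X | (∃ x : X, Z = fmIC le1 le2 (fmUp1 le1 {x})) ∧ Z ⊆ Y}) :=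
  fm_singleton_closures_join_dense_general le1 le2 Y hY
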